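/- For H ∈ (1/2,1), nonnegative integers n < m with n* = (n+1/2)π, m* = (m+1/2)π, the integral over the parallelogram V₁ = {(x,y) : 0 ≤ y ≤ 1, |y − x| ≤ 1} of |x−y|^{2H−2} sin(n*x) sin(m*y) equals ∫₀¹ sin(m*v) sin(n*v) dv · ∫_{−1}^1 |u|^{2H−2} cos(n*u) du, and ∫₀¹ sin(m*v) sin(n*v) dv = 0 for m ≠ n, hence the parallelogram integral vanishes. -/

import Mathlib

/-!
The shear `(x, y) ↦ (y, x - y)` preserves Lebesgue measure and maps the parallelogram
`V₁` onto the rectangle `[0, 1] × [-1, 1]`, so by Fubini the integral becomes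
`∫₀¹ sin(m* v) (∫₋₁¹ |u|^(2H-2) sin(n* (v + u)) du) dv`. Expanding `sin(n* (v + u))`, the odd
part `|u|^(2H-2) sin(n* u)` integrates to zero, leaving `sin(n* v) ∫₋₁¹ |u|^(2H-2) cos(n* u) du`.
Finally `sin(m* v) sin(n* v)` is a difference of cosines of nonzero integer multiples of `π v`,
whose integrals over `[0, 1]` vanish.
-/

open Real MeasureTheory Set

theorem intervalIntegral.integral_symm_eq_zero_of_odd {E : Type*} [NormedAddCommGroup E]
    [NormedSpace ℝ E] {f : ℝ → E} (hf : ∀ x, f (-x) = -f x) (r : ℝ) :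
    ∫ x in -r..r, f x = 0 := by
  have h := intervalIntegral.integral_comp_neg (a := -r) (b := r) f
  simp only [hf, intervalIntegral.integral_neg, neg_neg] at h
  have : (2 : ℝ) • ∫ x in -r..r, f x = 0 := by
    rw [two_smul]
    nth_rw 1 [← h]
    exact neg_add_cancel _
  exact (smul_eq_zero.mp this).resolve_left two_ne_zero

theorem intervalIntegrable_abs_rpow {p : ℝ} (hp : -1 < p) (a b : ℝ) :
    IntervalIntegrable (fun u : ℝ => |u| ^ p) volume a b := by
  refine intervalIntegrable_of_even (fun x => by rw [abs_neg]) (fun c hc => ?_)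
  refine (intervalIntegral.intervalIntegrable_rpow' hp).congr ?_
  intro x hx
  rw [uIoc_of_le hc.le] at hx
  simp only [abs_of_pos hx.1]

theorem integral_cos_int_mul_pi_mul {k : ℤ} (hk : k ≠ 0) :
    ∫ v in (0 : ℝ)..1, cos (k * π * v) = 0 := by
  have hc : (k * π : ℝ) ≠ 0 := mul_ne_zero (Int.cast_ne_zero.2 hk) pi_ne_zero
  simp [intervalIntegral.integral_comp_mul_left (fun x => cos x) hc, sin_int_mul_pi]

theorem integral_sin_half_int_mul_pi_mul_sin {n m : ℕ} (hnm : n ≠ m) :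
    ∫ v in (0 : ℝ)..1, sin ((m + 1/2) * π * v) * sin ((n + 1/2) * π * v) = 0 := by
  have hprod : ∀ A B v : ℝ,
      sin (B * v) * sin (A * v) = (cos ((B - A) * v) - cos ((B + A) * v)) / 2 := by
    intro A B v
    rw [sub_mul, add_mul, cos_sub, cos_add]
    ring
  have hdiff : ((m + 1/2) * π - (n + 1/2) * π : ℝ) = ((m - n : ℤ) : ℝ) * π := by
    push_cast; ring
  have hsum : ((m + 1/2) * π + (n + 1/2) * π : ℝ) = ((m + n + 1 : ℤ) : ℝ) * π := by
    push_cast; ring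
  have hcos : ∀ c : ℝ, IntervalIntegrable (fun v => cos (c * v)) volume 0 1 := fun c =>
    (continuous_cos.comp (continuous_const_mul c)).intervalIntegrable 0 1
  simp only [hprod, hdiff, hsum, intervalIntegral.integral_div,
    intervalIntegral.integral_sub (hcos _) (hcos _)]
  rw [integral_cos_int_mul_pi_mul (by omega), integral_cos_int_mul_pi_mul (by omega)]
  norm_num

theorem integral_abs_rpow_mul_sin_add {p : ℝ} (hp : -1 < p) (a v r : ℝ) :
    ∫ u in -r..r, |u| ^ p * sin (a * (v + u))
      = sin (a * v) * ∫ u in -r..r, |u| ^ p * cos (a * u) := by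
  have hsplit : ∀ u : ℝ, |u| ^ p * sin (a * (v + u))
      = sin (a * v) * (|u| ^ p * cos (a * u)) + cos (a * v) * (|u| ^ p * sin (a * u)) := by
    intro u
    rw [mul_add, sin_add]
    ring
  have hodd : ∫ u in -r..r, |u| ^ p * sin (a * u) = 0 :=
    intervalIntegral.integral_symm_eq_zero_of_odd
      (fun u => by rw [abs_neg, mul_neg, sin_neg, mul_neg]) r
  have hint : ∀ g : ℝ → ℝ, Continuous g →
      IntervalIntegrable (fun u => |u| ^ p * g (a * u)) volume (-r) r := fun g hg =>
    (intervalIntegrable_abs_rpow hp _ _).mul_continuousOn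
      (hg.comp (continuous_const_mul a)).continuousOn
  simp only [hsplit]
  rw [intervalIntegral.integral_add ((hint cos continuous_cos).const_mul _)
      ((hint sin continuous_sin).const_mul _),
    intervalIntegral.integral_const_mul, intervalIntegral.integral_const_mul, hodd, mul_zero,
    add_zero]

theorem integrableOn_abs_rpow_mul_sin_mul_sin {p : ℝ} (hp : -1 < p) (a b c₀ c₁ d₀ d₁ : ℝ) :
    IntegrableOn (fun z : ℝ × ℝ => |z.2| ^ p * sin (a * (z.1 + z.2)) * sin (b * z.1))
      (Icc c₀ c₁ ×ˢ Icc d₀ d₁) := by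
  have hpow : IntegrableOn (fun u : ℝ => |u| ^ p) (Icc d₀ d₁) := by
    rw [integrableOn_Icc_iff_integrableOn_Ioc]
    exact (intervalIntegrable_abs_rpow hp d₀ d₁).1
  have hprod : IntegrableOn (fun z : ℝ × ℝ => (1 : ℝ) * |z.2| ^ p) (Icc c₀ c₁ ×ˢ Icc d₀ d₁) := by
    rw [IntegrableOn, Measure.volume_eq_prod, ← Measure.prod_restrict]
    exact (integrable_const (μ := volume.restrict (Icc c₀ c₁)) (1 : ℝ)).mul_prod hpow
  have hbdd := hprod.bdd_mul (c := 1)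
    (f := fun z : ℝ × ℝ => sin (a * (z.1 + z.2)) * sin (b * z.1))
    (by fun_prop) (ae_of_all _ fun z => by
      simpa only [norm_mul, Real.norm_eq_abs] using
        mul_le_one₀ (abs_sin_le_one _) (abs_nonneg _) (abs_sin_le_one _))
  refine hbdd.congr (ae_of_all _ fun z => ?_)
  ring

theorem setIntegral_parallelogram_abs_sub_rpow_mul_sin_mul_sin {p : ℝ} (hp : -1 < p) (a b : ℝ) :
    ∫ z in {z : ℝ × ℝ | 0 ≤ z.2 ∧ z.2 ≤ 1 ∧ |z.2 - z.1| ≤ 1},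
        |z.1 - z.2| ^ p * sin (a * z.1) * sin (b * z.2)
      = (∫ v in (0 : ℝ)..1, sin (b * v) * sin (a * v)) *
          ∫ u in (-1 : ℝ)..1, |u| ^ p * cos (a * u) := by
  set G : ℝ × ℝ → ℝ := fun z => |z.2| ^ p * sin (a * (z.1 + z.2)) * sin (b * z.1)
  set T : ℝ × ℝ → ℝ × ℝ := fun z => (z.2, z.1 - z.2)
  have hT : MeasurePreserving T volume volume := measurePreserving_prod_sub_swap volume volume
  have hT_emb : MeasurableEmbedding T :=
    (MeasurableEquiv.prodComm.trans (MeasurableEquiv.shearSubRight ℝ)).measurableEmbedding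
  have hV : {z : ℝ × ℝ | 0 ≤ z.2 ∧ z.2 ≤ 1 ∧ |z.2 - z.1| ≤ 1}
      = T ⁻¹' (Icc 0 1 ×ˢ Icc (-1) 1) := by
    ext z
    simp only [mem_ofPred_eq, mem_preimage, mem_prod, mem_Icc, abs_le, T, and_assoc]
    constructor <;> rintro ⟨h₁, h₂, h₃, h₄⟩ <;> exact ⟨h₁, h₂, by linarith, by linarith⟩
  have hfiber : ∀ v : ℝ, ∫ u in Icc (-1 : ℝ) 1, G (v, u)
      = sin (b * v) * sin (a * v) * ∫ u in (-1 : ℝ)..1, |u| ^ p * cos (a * u) := by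
    intro v
    simp only [G]
    rw [integral_Icc_eq_integral_Ioc, ← intervalIntegral.integral_of_le (by norm_num),
      intervalIntegral.integral_mul_const, integral_abs_rpow_mul_sin_add hp]
    ring
  calc _ = ∫ z in T ⁻¹' (Icc 0 1 ×ˢ Icc (-1) 1), G (T z) := by
        rw [hV]
        refine setIntegral_congr_fun (hT.measurable (measurableSet_Icc.prod measurableSet_Icc))
          fun z _ => ?_
        simp only [G, T, add_sub_cancel]
    _ = ∫ z in Icc 0 1 ×ˢ Icc (-1) 1, G z := hT.setIntegral_preimage_emb hT_emb G _
    _ = ∫ v in Icc (0 : ℝ) 1, ∫ u in Icc (-1 : ℝ) 1, G (v, u) :=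
        setIntegral_prod G (integrableOn_abs_rpow_mul_sin_mul_sin hp a b 0 1 (-1) 1)
    _ = _ := by
        simp only [hfiber]
        rw [integral_Icc_eq_integral_Ioc, ← intervalIntegral.integral_of_le (by norm_num),
          intervalIntegral.integral_mul_const]

theorem stmt_18 (H : ℝ) (hH : H ∈ Set.Ioo (1/2 : ℝ) 1) (n m : ℕ) (hnm : n < m) :
    (∫ p in {p : ℝ × ℝ | 0 ≤ p.2 ∧ p.2 ≤ 1 ∧ |p.2 - p.1| ≤ 1},
        |p.1 - p.2| ^ (2 * H - 2) * Real.sin (((n : ℝ) + 1/2) * Real.pi * p.1) *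
          Real.sin (((m : ℝ) + 1/2) * Real.pi * p.2))
      = (∫ v in (0:ℝ)..1,
          Real.sin (((m : ℝ) + 1/2) * Real.pi * v) * Real.sin (((n : ℝ) + 1/2) * Real.pi * v)) *
        (∫ u in (-1:ℝ)..1, |u| ^ (2 * H - 2) * Real.cos (((n : ℝ) + 1/2) * Real.pi * u)) ∧
    (∫ v in (0:ℝ)..1,
        Real.sin (((m : ℝ) + 1/2) * Real.pi * v) * Real.sin (((n : ℝ) + 1/2) * Real.pi * v)) = 0 ∧
    (∫ p in {p : ℝ × ℝ | 0 ≤ p.2 ∧ p.2 ≤ 1 ∧ |p.2 - p.1| ≤ 1},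
        |p.1 - p.2| ^ (2 * H - 2) * Real.sin (((n : ℝ) + 1/2) * Real.pi * p.1) *
          Real.sin (((m : ℝ) + 1/2) * Real.pi * p.2)) = 0 := by
  have hp : (-1 : ℝ) < 2 * H - 2 := by linarith [hH.1]
  have horth := integral_sin_half_int_mul_pi_mul_sin hnm.ne
  have hV := setIntegral_parallelogram_abs_sub_rpow_mul_sin_mul_sin hp
    ((n + 1/2) * π) ((m + 1/2) * π)
  exact ⟨hV, horth, by rw [hV, horth, zero_mul]⟩
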